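/- arXiv:0704.2800 — 5 statements merged into one kernel-verified Lean document; each statement's English description precedes it below -/
import Mathlib

section
/- Let X be a locally compact, second countable, Hausdorff topological space and let R : C₀(X) → C₀(X) be a bounded linear map (C₀(X) the continuous complex-valued functions on X vanishing at infinity, with the supremum norm) such that for every f ∈ C₀(X) with compact support, the support of Rf is contained in the support of f. Then there exists a bounded continuous function k : X → ℂ with ‖k‖_∞ ≤ ‖R‖ such that Rf = k·f (pointwise product) for all f ∈ C₀(X). -/
/-!
Fix `x` and consider the continuous functional `φ f = (R f) x`. The support condition says that
`φ` kills compactly supported functions vanishing near `x`. Multiplying by Urysohn bump functions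
and using continuity of `φ`, it then kills every function vanishing near `x` (truncate outside a
large compact set), and then every function vanishing at `x` (cut off where the function is
small). Hence `φ f = φ e * f x` for any `e` with `e x = 1`. Taking for `e` a bump `e_x` of sup norm
`≤ 1` equal to `1` near `x` gives `k x = (R e_x) x`; near `x` the function `k` agrees with the
continuous function `R e_x`.
-/

open ZeroAtInfty Set Filter Topology

theorem ContinuousLinearMap.map_eq_zero_of_forall_exists_norm_sub_le {𝕜 E F : Type*}
    [NormedField 𝕜] [SeminormedAddCommGroup E] [NormedSpace 𝕜 E] [NormedAddCommGroup F]
    [NormedSpace 𝕜 F] (φ : E →L[𝕜] F) {g : E}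
    (h : ∀ ε > 0, ∃ g', φ g' = 0 ∧ ‖g - g'‖ ≤ ε) : φ g = 0 := by
  have hg : g ∈ closure (φ.ker : Set E) := by
    refine Metric.mem_closure_iff.2 fun ε hε => ?_
    obtain ⟨g', hg', hle⟩ := h (ε / 2) (half_pos hε)
    exact ⟨g', hg', by rw [dist_eq_norm]; linarith⟩
  exact φ.isClosed_ker.closure_subset hg

namespace ZeroAtInftyContinuousMap

section Norm

variable {X E : Type*} [TopologicalSpace X] [NormedAddCommGroup E]

theorem norm_apply_le (f : C₀(X, E)) (x : X) : ‖f x‖ ≤ ‖f‖ := by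
  simpa only [norm_toBCF_eq_norm, toBCF_apply] using f.toBCF.norm_coe_le_norm x

theorem norm_le {f : C₀(X, E)} {C : ℝ} (hC : 0 ≤ C) : ‖f‖ ≤ C ↔ ∀ x, ‖f x‖ ≤ C := by
  rw [← norm_toBCF_eq_norm, BoundedContinuousFunction.norm_le hC]
  rfl

variable (𝕜 : Type*) [NormedField 𝕜] [NormedSpace 𝕜 E]

noncomputable def evalCLM (x : X) : C₀(X, E) →L[𝕜] E :=
  LinearMap.mkContinuous
    { toFun := fun f => f x, map_add' := fun _ _ => rfl, map_smul' := fun _ _ => rfl } 1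
    fun f => (norm_apply_le f x).trans_eq (one_mul _).symm

end Norm

variable {X 𝕜 : Type*} [TopologicalSpace X] [RCLike 𝕜] (φ : C₀(X, 𝕜) →L[𝕜] 𝕜) {x : X}

theorem map_eq_map_mul_apply (hφ : ∀ g : C₀(X, 𝕜), g x = 0 → φ g = 0) {e : C₀(X, 𝕜)}
    (he : e x = 1) (f : C₀(X, 𝕜)) : φ f = φ e * f x := by
  have h := hφ (f - f x • e) (by simp [he])
  rwa [map_sub, map_smul, smul_eq_mul, sub_eq_zero, mul_comm] at h

variable [LocallyCompactSpace X] [T2Space X]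

theorem exists_hasCompactSupport_eqOn_one {K U : Set X} (hK : IsCompact K) (hU : IsOpen U)
    (hKU : K ⊆ U) :
    ∃ e : C₀(X, 𝕜), HasCompactSupport e ∧ EqOn e 1 K ∧ EqOn e 0 Uᶜ ∧
      ∀ y, ‖e y‖ ≤ 1 ∧ ‖1 - e y‖ ≤ 1 := by
  obtain ⟨t, ht1, ht0, htc, ht01⟩ := exists_continuous_one_zero_of_isCompact hK hU.isClosed_compl
    (disjoint_compl_right_iff_subset.mpr hKU)
  have hc : HasCompactSupport fun y => (t y : 𝕜) := htc.comp_left RCLike.ofReal_zero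
  refine ⟨⟨⟨fun y => (t y : 𝕜), by fun_prop⟩, hc.is_zero_at_infty⟩, hc,
    fun y hy => by simp [ht1 hy], fun y hy => by simp [ht0 hy], fun y => ?_⟩
  obtain ⟨h0, h1⟩ := ht01 y
  have hsub : (1 : 𝕜) - t y = ((1 - t y : ℝ) : 𝕜) := by push_cast; ring
  simp only [coe_mk, hsub, RCLike.norm_ofReal]
  constructor <;> rw [abs_le] <;> constructor <;> linarith

theorem exists_eventuallyEq_one_of_mem_nhds {U : Set X} (hU : U ∈ 𝓝 x) :
    ∃ e : C₀(X, 𝕜), (∀ᶠ y in 𝓝 x, e y = 1) ∧ EqOn e 0 Uᶜ ∧ ‖e‖ ≤ 1 := by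
  obtain ⟨K, hK, hxK, hKU⟩ :=
    exists_compact_subset isOpen_interior (mem_interior_iff_mem_nhds.mpr hU)
  obtain ⟨e, -, he1, he0, hle⟩ :=
    exists_hasCompactSupport_eqOn_one (𝕜 := 𝕜) hK isOpen_interior hKU
  refine ⟨e, eventually_of_mem (mem_interior_iff_mem_nhds.mp hxK) fun y hy => he1 hy,
    fun y hy => he0 fun hy' => hy (interior_subset hy'),
    (norm_le zero_le_one).2 fun y => (hle y).1⟩

theorem map_eq_zero_of_eventually_eq_zero
    (hφ : ∀ h : C₀(X, 𝕜), HasCompactSupport h → x ∉ tsupport h → φ h = 0)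
    {h : C₀(X, 𝕜)} (hh : ∀ᶠ y in 𝓝 x, h y = 0) : φ h = 0 := by
  refine φ.map_eq_zero_of_forall_exists_norm_sub_le fun ε hε => ?_
  obtain ⟨K, hK, hKc⟩ : ∃ K, IsCompact K ∧ Kᶜ ⊆ {y | ‖h y‖ < ε} :=
    mem_cocompact.mp ((zero_at_infty h).norm (Iio_mem_nhds (by simpa using hε)))
  obtain ⟨ψ, hψc, hψ1, -, hψle⟩ := exists_hasCompactSupport_eqOn_one (𝕜 := 𝕜) hK isOpen_univ
    (subset_univ K)
  refine ⟨h * ψ, hφ _ (by simpa only [coe_mul] using hψc.mul_left) ?_, (norm_le hε.le).2 ?_⟩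
  · rw [notMem_tsupport_iff_eventuallyEq]
    filter_upwards [hh] with y hy
    simp [hy]
  · intro y
    have hdiff : (h - h * ψ) y = h y * (1 - ψ y) := by simp [mul_sub]
    rw [hdiff, norm_mul]
    by_cases hy : y ∈ K
    · simp [hψ1 hy, hε.le]
    · calc ‖h y‖ * ‖1 - ψ y‖ ≤ ‖h y‖ * 1 := by gcongr; exact (hψle y).2
        _ ≤ ε := by simpa using (hKc hy).le

theorem map_eq_zero_of_apply_eq_zero
    (hφ : ∀ h : C₀(X, 𝕜), (∀ᶠ y in 𝓝 x, h y = 0) → φ h = 0)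
    {g : C₀(X, 𝕜)} (hg : g x = 0) : φ g = 0 := by
  refine φ.map_eq_zero_of_forall_exists_norm_sub_le fun ε hε => ?_
  have hU : {y | ‖g y‖ < ε} ∈ 𝓝 x :=
    (isOpen_lt (by fun_prop) continuous_const).mem_nhds (by simpa [hg] using hε)
  obtain ⟨e, he1, he0, hle⟩ := exists_eventuallyEq_one_of_mem_nhds (𝕜 := 𝕜) hU
  refine ⟨g - g * e, hφ _ ?_, (norm_le hε.le).2 fun y => ?_⟩
  · filter_upwards [he1] with y hy
    simp [hy]
  · have hdiff : (g - (g - g * e)) y = g y * e y := by simp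
    rw [hdiff, norm_mul]
    by_cases hy : ‖g y‖ < ε
    · calc ‖g y‖ * ‖e y‖ ≤ ‖g y‖ * 1 := by gcongr; exact (norm_apply_le e y).trans hle
        _ ≤ ε := by simpa using hy.le
    · simp [he0 hy, hε.le]

end ZeroAtInftyContinuousMap

open ZeroAtInftyContinuousMap in
theorem stmt0_general {X : Type*} [TopologicalSpace X] [LocallyCompactSpace X]
    [T2Space X]
    (R : C₀(X, ℂ) →L[ℂ] C₀(X, ℂ))
    (hR : ∀ f : C₀(X, ℂ), HasCompactSupport (f : X → ℂ) →
      tsupport ((R f : C₀(X, ℂ)) : X → ℂ) ⊆ tsupport (f : X → ℂ)) :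
    ∃ k : X → ℂ, Continuous k ∧ (∀ x : X, ‖k x‖ ≤ ‖R‖) ∧
      ∀ (f : C₀(X, ℂ)) (x : X), (R f) x = k x * f x := by
  have hmul (x : X) {e : C₀(X, ℂ)} (he : e x = 1) (f : C₀(X, ℂ)) : R f x = R e x * f x := by
    refine map_eq_map_mul_apply ((evalCLM ℂ x).comp R) (fun g hg => ?_) he f
    refine map_eq_zero_of_apply_eq_zero _ (fun h hh => ?_) hg
    exact map_eq_zero_of_eventually_eq_zero _
      (fun h hc hx => image_eq_zero_of_notMem_tsupport (f := R h) fun hx' => hx (hR h hc hx')) hh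
  choose E hE1 _ hEle using fun x : X => exists_eventuallyEq_one_of_mem_nhds (𝕜 := ℂ)
    (univ_mem : univ ∈ 𝓝 x)
  refine ⟨fun x => R (E x) x, continuous_iff_continuousAt.2 fun x => ?_, fun x => ?_,
    fun f x => hmul x (hE1 x).self_of_nhds f⟩
  · refine (R (E x)).continuous.continuousAt.congr ?_
    filter_upwards [hE1 x] with y hy
    show R (E x) y = R (E y) y
    rw [hmul y (hE1 y).self_of_nhds (E x), hy, mul_one]
  · calc ‖R (E x) x‖ ≤ ‖R (E x)‖ := norm_apply_le _ x
      _ ≤ ‖R‖ * 1 := R.le_opNorm_of_le (hEle x)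
      _ = ‖R‖ := mul_one _

/-- If `X` is a locally compact, second countable Hausdorff space and
`R : C₀(X,ℂ) → C₀(X,ℂ)` is a bounded linear map such that `supp (R f) ⊆ supp f` for every
compactly supported `f`, then there is a bounded continuous `k : X → ℂ` with
`‖k‖_∞ ≤ ‖R‖` such that `R f = k • f` pointwise for all `f ∈ C₀(X)`. -/
theorem stmt0 {X : Type*} [TopologicalSpace X] [LocallyCompactSpace X]
    [SecondCountableTopology X] [T2Space X]
    (R : C₀(X, ℂ) →L[ℂ] C₀(X, ℂ))
    (hR : ∀ f : C₀(X, ℂ), HasCompactSupport (f : X → ℂ) →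
      tsupport ((R f : C₀(X, ℂ)) : X → ℂ) ⊆ tsupport (f : X → ℂ)) :
    ∃ k : X → ℂ, Continuous k ∧ (∀ x : X, ‖k x‖ ≤ ‖R‖) ∧
      ∀ (f : C₀(X, ℂ)) (x : X), (R f) x = k x * f x :=
  stmt0_general R hR
end

section
/- The topology on H generated by ℬ is Hausdorff. -/
open TopologicalSpace Set

/-- The collection `ℬ` of subsets of `H = G ⊔ X`: all open subsets of `G`, together with
all sets of the form `r̃⁻¹(W) \ C` where `W ⊆ X` is open and `C ⊆ G` is compact.
Here `r̃ = Sum.elim r id : G ⊕ X → X` extends `r` by `r̃(∞^u) = u`. -/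
def basisSets (G X : Type*) [TopologicalSpace G] [TopologicalSpace X] (r : G → X) :
    Set (Set (G ⊕ X)) :=
  {s | ∃ U : Set G, IsOpen U ∧ s = Sum.inl '' U} ∪
  {s | ∃ (W : Set X) (C : Set G), IsOpen W ∧ IsCompact C ∧
      s = Sum.elim r id ⁻¹' W \ Sum.inl '' C}

open Topology

namespace basisSets

variable {G X : Type*} [TopologicalSpace G] [TopologicalSpace X] (r : G → X)

theorem isOpen_inl_image {U : Set G} (hU : IsOpen U) :
    IsOpen[generateFrom (basisSets G X r)] (Sum.inl '' U) :=
  isOpen_generateFrom_of_mem (Or.inl ⟨U, hU, rfl⟩)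

theorem isOpen_preimage_diff_inl_image {W : Set X} {C : Set G} (hW : IsOpen W)
    (hC : IsCompact C) :
    IsOpen[generateFrom (basisSets G X r)] (Sum.elim r id ⁻¹' W \ Sum.inl '' C) :=
  isOpen_generateFrom_of_mem (Or.inr ⟨W, C, hW, hC, rfl⟩)

theorem separate_inl_inl [T2Space G] {x y : G} (hxy : x ≠ y) :
    ∃ U V : Set (G ⊕ X), IsOpen[generateFrom (basisSets G X r)] U ∧
      IsOpen[generateFrom (basisSets G X r)] V ∧ Sum.inl x ∈ U ∧ Sum.inl y ∈ V ∧
      Disjoint U V := by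
  obtain ⟨U, V, hU, hV, hxU, hyV, hUV⟩ := t2_separation hxy
  exact ⟨_, _, isOpen_inl_image r hU, isOpen_inl_image r hV, mem_image_of_mem _ hxU,
    mem_image_of_mem _ hyV, (disjoint_image_iff Sum.inl_injective).2 hUV⟩

/-- A compact neighbourhood `K` of `x` separates `x` from every point at infinity. -/
theorem separate_inl_inr [WeaklyLocallyCompactSpace G] (x : G) (v : X) :
    ∃ U V : Set (G ⊕ X), IsOpen[generateFrom (basisSets G X r)] U ∧
      IsOpen[generateFrom (basisSets G X r)] V ∧ Sum.inl x ∈ U ∧ Sum.inr v ∈ V ∧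
      Disjoint U V := by
  obtain ⟨K, hK, hKx⟩ := exists_compact_mem_nhds x
  obtain ⟨U, hUK, hU, hxU⟩ := mem_nhds_iff.mp hKx
  refine ⟨_, _, isOpen_inl_image r hU, isOpen_preimage_diff_inl_image r isOpen_univ hK,
    mem_image_of_mem _ hxU, ⟨trivial, by simp⟩, ?_⟩
  exact disjoint_sdiff_right.mono_left (image_mono hUK)

theorem separate_inr_inr [T2Space X] {u v : X} (huv : u ≠ v) :
    ∃ U V : Set (G ⊕ X), IsOpen[generateFrom (basisSets G X r)] U ∧
      IsOpen[generateFrom (basisSets G X r)] V ∧ Sum.inr u ∈ U ∧ Sum.inr v ∈ V ∧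
      Disjoint U V := by
  obtain ⟨W₁, W₂, hW₁, hW₂, huW, hvW, hW⟩ := t2_separation huv
  refine ⟨_, _, isOpen_preimage_diff_inl_image r hW₁ isCompact_empty,
    isOpen_preimage_diff_inl_image r hW₂ isCompact_empty, ⟨huW, by simp⟩, ⟨hvW, by simp⟩, ?_⟩
  exact (hW.preimage _).mono sdiff_subset sdiff_subset

end basisSets

theorem stmt2_general {G X : Type*} [TopologicalSpace G] [TopologicalSpace X]
    [LocallyCompactSpace G] [T2Space G]
    [T2Space X]
    (r : G → X) :
    @T2Space (G ⊕ X) (TopologicalSpace.generateFrom (basisSets G X r)) := by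
  refine @T2Space.mk _ (generateFrom (basisSets G X r)) ?_
  rintro (x | u) (y | v) hne
  · exact basisSets.separate_inl_inl r fun h => hne (congrArg _ h)
  · exact basisSets.separate_inl_inr r x v
  · obtain ⟨U, V, hU, hV, hyU, huV, hUV⟩ := basisSets.separate_inl_inr r y u
    exact ⟨V, U, hV, hU, huV, hyU, hUV.symm⟩
  · exact basisSets.separate_inr_inr r fun h => hne (congrArg _ h)

/-- the topology on `H` generated by `ℬ` is Hausdorff. -/
theorem stmt2 {G X : Type*} [TopologicalSpace G] [TopologicalSpace X]
    [LocallyCompactSpace G] [SecondCountableTopology G] [T2Space G]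
    [LocallyCompactSpace X] [SecondCountableTopology X] [T2Space X]
    (r : G → X) (hc : Continuous r) (ho : IsOpenMap r) (hs : Function.Surjective r) :
    @T2Space (G ⊕ X) (TopologicalSpace.generateFrom (basisSets G X r)) :=
  stmt2_general r
end

section
/- The topology on H generated by ℬ is locally compact, i.e. every point of H has a compact neighborhood. -/
open TopologicalSpace Set

/-! A point `Sum.inr u` has the neighbourhood `r̃⁻¹(K)`, `K` a compact neighbourhood of `u`.
By Alexander's subbasis theorem it suffices to refine covers of `r̃⁻¹(K)` by members of `ℬ`.
The members containing points at infinity have the form `r̃⁻¹(W) \ C`; finitely many of them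
cover `r̃⁻¹(K)` off a compact `C ⊆ G`, and `C ∩ r⁻¹(K)` is compact in `G`, hence covered by
finitely many further members. -/

namespace basisSets

variable {G X : Type*} [TopologicalSpace G] [TopologicalSpace X] {r : G → X}

theorem exists_finite_subcover_diff_compact {K : Set X} (hK : IsCompact K)
    {P : Set (Set (G ⊕ X))} (hPB : P ⊆ basisSets G X r)
    (hP : Sum.elim r id ⁻¹' K ⊆ ⋃₀ P) :
    ∃ Q ⊆ P, Q.Finite ∧ ∃ C : Set G, IsCompact C ∧
      Sum.elim r id ⁻¹' K \ Sum.inl '' C ⊆ ⋃₀ Q := by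
  have hinfty : ∀ v ∈ K, ∃ W : Set X, ∃ C : Set G, IsOpen W ∧ IsCompact C ∧ v ∈ W ∧
      Sum.elim r id ⁻¹' W \ Sum.inl '' C ∈ P := by
    intro v hv
    obtain ⟨s, hsP, hvs⟩ := hP (show Sum.elim r id (Sum.inr v) ∈ K from hv)
    rcases hPB hsP with ⟨U, -, rfl⟩ | ⟨W, C, hW, hC, rfl⟩
    · simp at hvs
    · exact ⟨W, C, hW, hC, hvs.1, hsP⟩
  choose! W C hW hC hvW hWCP using hinfty
  obtain ⟨F, hFK, hKF⟩ := hK.elim_nhds_subcover W fun v hv => (hW v hv).mem_nhds (hvW v hv)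
  refine ⟨(fun v => Sum.elim r id ⁻¹' W v \ Sum.inl '' C v) '' F, ?_, F.finite_toSet.image _,
    ⋃ v ∈ F, C v, F.finite_toSet.isCompact_biUnion fun v hv => hC v (hFK v hv), ?_⟩
  · rintro _ ⟨v, hv, rfl⟩
    exact hWCP v (hFK v hv)
  · rintro x ⟨hxK, hxC⟩
    obtain ⟨v, hvF, hxW⟩ := mem_iUnion₂.1 (hKF hxK)
    refine ⟨_, mem_image_of_mem _ hvF, hxW, fun ⟨g, hg, hgx⟩ => hxC ⟨g, ?_, hgx⟩⟩
    exact mem_iUnion₂.2 ⟨v, hvF, hg⟩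

variable [t : TopologicalSpace (G ⊕ X)]

theorem isOpenMap_inl (ht : t = generateFrom (basisSets G X r)) :
    IsOpenMap (Sum.inl : G → G ⊕ X) := fun U hU =>
  ht ▸ isOpen_generateFrom_of_mem (Or.inl ⟨U, hU, rfl⟩)

theorem continuous_sumElim (ht : t = generateFrom (basisSets G X r)) :
    Continuous (Sum.elim r id : G ⊕ X → X) :=
  continuous_def.2 fun W hW => ht ▸ isOpen_generateFrom_of_mem
    (Or.inr ⟨W, ∅, hW, isCompact_empty, by rw [image_empty, sdiff_empty]⟩)

theorem continuous_inl [T2Space G] (ht : t = generateFrom (basisSets G X r)) (hc : Continuous r) :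
    Continuous (Sum.inl : G → G ⊕ X) := by
  subst ht
  refine continuous_generateFrom_iff.2 ?_
  rintro s (⟨U, hU, rfl⟩ | ⟨W, C, hW, hC, rfl⟩)
  · rwa [preimage_image_eq U Sum.inl_injective]
  · rw [preimage_sdiff, preimage_image_eq C Sum.inl_injective]
    exact (hW.preimage hc).sdiff hC.isClosed

theorem isCompact_preimage_sumElim [T2Space G] [T2Space X]
    (ht : t = generateFrom (basisSets G X r)) (hc : Continuous r) {K : Set X}
    (hK : IsCompact K) : IsCompact (Sum.elim r id ⁻¹' K) := by
  refine isCompact_generateFrom ht fun P hPB hP => ?_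
  obtain ⟨Q, hQP, hQ, C, hC, hCQ⟩ := exists_finite_subcover_diff_compact hK hPB hP
  have hCK : IsCompact (Sum.inl '' (C ∩ r ⁻¹' K) : Set (G ⊕ X)) :=
    (hC.inter_right (hK.isClosed.preimage hc)).image (continuous_inl ht hc)
  obtain ⟨Q', hQ'P, hQ', hCQ'⟩ := hCK.elim_finite_subcover_image (c := id)
    (fun s hs => ht ▸ isOpen_generateFrom_of_mem (hPB hs))
    (by rintro _ ⟨g, ⟨-, hgK⟩, rfl⟩; simpa using hP hgK)
  refine ⟨Q ∪ Q', union_subset hQP hQ'P, hQ.union hQ', fun x hx => ?_⟩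
  by_cases hxC : x ∈ Sum.inl '' C
  · obtain ⟨g, hg, rfl⟩ := hxC
    obtain ⟨s, hsQ', hxs⟩ := mem_iUnion₂.1 (hCQ' ⟨g, ⟨hg, hx⟩, rfl⟩)
    exact ⟨s, Or.inr hsQ', hxs⟩
  · obtain ⟨s, hsQ, hxs⟩ := hCQ ⟨hx, hxC⟩
    exact ⟨s, Or.inl hsQ, hxs⟩

end basisSets

theorem stmt3_general {G X : Type*} [TopologicalSpace G] [TopologicalSpace X]
    [LocallyCompactSpace G] [T2Space G]
    [LocallyCompactSpace X] [T2Space X]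
    (r : G → X) (hc : Continuous r) :
    ∀ h : G ⊕ X, ∃ K : Set (G ⊕ X),
      @IsCompact (G ⊕ X) (TopologicalSpace.generateFrom (basisSets G X r)) K ∧
      K ∈ @nhds (G ⊕ X) (TopologicalSpace.generateFrom (basisSets G X r)) h := by
  let t : TopologicalSpace (G ⊕ X) := generateFrom (basisSets G X r)
  have ht : t = generateFrom (basisSets G X r) := rfl
  rintro (g | u)
  · obtain ⟨K, hK, hKg⟩ := exists_compact_mem_nhds g
    exact ⟨Sum.inl '' K, hK.image (basisSets.continuous_inl ht hc),
      (basisSets.isOpenMap_inl ht).image_mem_nhds hKg⟩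
  · obtain ⟨K, hK, hKu⟩ := exists_compact_mem_nhds u
    exact ⟨Sum.elim r id ⁻¹' K, basisSets.isCompact_preimage_sumElim ht hc hK,
      (basisSets.continuous_sumElim ht).continuousAt.preimage_mem_nhds hKu⟩

/-- the topology on `H` generated by `ℬ` is locally compact:
every point of `H` has a compact neighborhood. -/
theorem stmt3 {G X : Type*} [TopologicalSpace G] [TopologicalSpace X]
    [LocallyCompactSpace G] [SecondCountableTopology G] [T2Space G]
    [LocallyCompactSpace X] [SecondCountableTopology X] [T2Space X]
    (r : G → X) (hc : Continuous r) (ho : IsOpenMap r) (hs : Function.Surjective r) :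
    ∀ h : G ⊕ X, ∃ K : Set (G ⊕ X),
      @IsCompact (G ⊕ X) (TopologicalSpace.generateFrom (basisSets G X r)) K ∧
      K ∈ @nhds (G ⊕ X) (TopologicalSpace.generateFrom (basisSets G X r)) h :=
  stmt3_general r hc
end

section
/- The canonical inclusion of G into H is an open embedding: G is an open subset of H, and the relative topology that G inherits from H coincides with its original topology. -/
open TopologicalSpace Set

theorem Sum.preimage_inl_preimage_elim_diff_image_inl {α β γ : Type*} (f : α → γ) (g : β → γ)
    (W : Set γ) (C : Set α) :
    Sum.inl ⁻¹' (Sum.elim f g ⁻¹' W \ Sum.inl '' C : Set (α ⊕ β)) = f ⁻¹' W \ C := by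
  ext a
  simp [Sum.inl_injective.mem_set_image]

section basisSets

variable {G X : Type*} [TopologicalSpace G] [TopologicalSpace X] (r : G → X)

theorem continuous_inl_generateFrom_basisSets [T2Space G] (hc : Continuous r) :
    @Continuous G (G ⊕ X) _ (generateFrom (basisSets G X r)) Sum.inl := by
  refine continuous_generateFrom_iff.mpr ?_
  rintro s (⟨U, hU, rfl⟩ | ⟨W, C, hW, hC, rfl⟩)
  · rwa [preimage_image_eq U Sum.inl_injective]
  · rw [Sum.preimage_inl_preimage_elim_diff_image_inl]
    exact (hW.preimage hc).sdiff hC.isClosed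

theorem isOpenMap_inl_generateFrom_basisSets :
    @IsOpenMap G (G ⊕ X) _ (generateFrom (basisSets G X r)) Sum.inl :=
  fun U hU => GenerateOpen.basic _ (Or.inl ⟨U, hU, rfl⟩)

end basisSets

theorem stmt5_general {G X : Type*} [TopologicalSpace G] [TopologicalSpace X]
    [T2Space G]
    (r : G → X) (hc : Continuous r) :
    @Topology.IsOpenEmbedding G (G ⊕ X) _ (TopologicalSpace.generateFrom (basisSets G X r))
      Sum.inl :=
  letI := generateFrom (basisSets G X r)
  Topology.isOpenEmbedding_iff_continuous_injective_isOpenMap.mpr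
    ⟨continuous_inl_generateFrom_basisSets r hc, Sum.inl_injective,
      isOpenMap_inl_generateFrom_basisSets r⟩

/-- the canonical inclusion `G → H` is an open embedding: `G` is open in `H`
and the relative topology on `G` inherited from `H` is the original topology of `G`. -/
theorem stmt5 {G X : Type*} [TopologicalSpace G] [TopologicalSpace X]
    [LocallyCompactSpace G] [SecondCountableTopology G] [T2Space G]
    [LocallyCompactSpace X] [SecondCountableTopology X] [T2Space X]
    (r : G → X) (hc : Continuous r) (ho : IsOpenMap r) (hs : Function.Surjective r) :
    @Topology.IsOpenEmbedding G (G ⊕ X) _ (TopologicalSpace.generateFrom (basisSets G X r))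
      Sum.inl :=
  stmt5_general r hc
end

section
/- For each u ∈ X, the fiber H^u = r̃⁻¹({u}), with the subspace topology inherited from H, is the one-point compactification of the fiber G^u = r⁻¹({u}) (with its subspace topology from G): the natural bijection from the one-point compactification OnePoint(G^u) to H^u, sending the point at infinity to ∞^u and each point of G^u to itself, is a homeomorphism. -/
open TopologicalSpace Set

open OnePoint Topology

namespace FiberCompactification

variable {G X : Type*} (r : G → X) (u : X)

def toFiber : OnePoint (r ⁻¹' {u}) → {h : G ⊕ X // Sum.elim r id h = u} :=
  fun z => Option.elim z ⟨Sum.inr u, rfl⟩ (fun x => ⟨Sum.inl x.1, x.2⟩)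

@[simp]
lemma val_toFiber_infty : (toFiber r u ∞).1 = Sum.inr u := rfl

@[simp]
lemma val_toFiber_coe (x : r ⁻¹' {u}) : (toFiber r u x).1 = Sum.inl x.1 := rfl

lemma toFiber_bijective : Function.Bijective (toFiber r u) := by
  refine ⟨fun a b hab => ?_, ?_⟩
  · have h := congrArg Subtype.val hab
    induction a using OnePoint.rec <;> induction b using OnePoint.rec <;>
      simp only [val_toFiber_infty, val_toFiber_coe, reduceCtorEq, Sum.inl.injEq] at h
    · rfl
    · rw [Subtype.ext h]
  · rintro ⟨x | v, hv⟩
    · exact ⟨(⟨x, hv⟩ : r ⁻¹' {u}), rfl⟩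
    · obtain rfl : v = u := hv
      exact ⟨∞, rfl⟩

lemma preimage_val_toFiber_inl_image (U : Set G) :
    (Subtype.val ∘ toFiber r u) ⁻¹' (Sum.inl '' U) = (↑) '' ((↑) ⁻¹' U : Set (r ⁻¹' {u})) := by
  ext z
  induction z using OnePoint.rec <;> simp

lemma preimage_val_toFiber_diff_of_mem {W : Set X} (hW : u ∈ W) (C : Set G) :
    (Subtype.val ∘ toFiber r u) ⁻¹' (Sum.elim r id ⁻¹' W \ Sum.inl '' C) =
      ((↑) '' ((↑) ⁻¹' C : Set (r ⁻¹' {u})))ᶜ := by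
  ext z
  induction z using OnePoint.rec with
  | infty => simp [hW]
  | coe x =>
    have hx : r x = u := x.2
    simp [hx, hW]

lemma preimage_val_toFiber_diff_of_notMem {W : Set X} (hW : u ∉ W) (C : Set G) :
    (Subtype.val ∘ toFiber r u) ⁻¹' (Sum.elim r id ⁻¹' W \ Sum.inl '' C) = ∅ := by
  ext z
  induction z using OnePoint.rec with
  | infty => simp [hW]
  | coe x =>
    have hx : r x = u := x.2
    simp [hx, hW]

variable [TopologicalSpace G] [TopologicalSpace X]

lemma isOpen_preimage_val_toFiber [T2Space G] (hu : IsClosed (r ⁻¹' {u})) {b : Set (G ⊕ X)}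
    (hb : b ∈ basisSets G X r) : IsOpen ((Subtype.val ∘ toFiber r u) ⁻¹' b) := by
  rcases hb with ⟨U, hU, rfl⟩ | ⟨W, C, -, hC, rfl⟩
  · rw [preimage_val_toFiber_inl_image, isOpen_image_coe]
    exact hU.preimage continuous_subtype_val
  by_cases hW : u ∈ W
  · rw [preimage_val_toFiber_diff_of_mem r u hW, isOpen_compl_image_coe]
    exact ⟨hC.isClosed.preimage continuous_subtype_val,
      hu.isClosedEmbedding_subtypeVal.isCompact_preimage hC⟩
  · rw [preimage_val_toFiber_diff_of_notMem r u hW]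
    exact isOpen_empty

lemma exists_mem_basisSets_preimage_val_toFiber_eq {s : Set (OnePoint (r ⁻¹' {u}))}
    (hs : IsOpen s) : ∃ b ∈ basisSets G X r, (Subtype.val ∘ toFiber r u) ⁻¹' b = s := by
  by_cases hinf : ∞ ∈ s
  · obtain ⟨-, hK⟩ := (isOpen_iff_of_mem hinf).1 hs
    refine ⟨_, Or.inr ⟨univ, _, isOpen_univ, hK.image continuous_subtype_val, rfl⟩, ?_⟩
    rw [preimage_val_toFiber_diff_of_mem r u (mem_univ u),
      preimage_image_eq _ Subtype.val_injective]
    ext z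
    induction z using OnePoint.rec <;> simp [hinf]
  · obtain ⟨U, hU, hUs⟩ := isOpen_induced_iff.1 ((isOpen_iff_of_notMem hinf).1 hs)
    refine ⟨_, Or.inl ⟨U, hU, rfl⟩, ?_⟩
    rw [preimage_val_toFiber_inl_image, hUs]
    ext z
    induction z using OnePoint.rec <;> simp [hinf]

theorem isHomeomorph_toFiber [T2Space G] (hu : IsClosed (r ⁻¹' {u})) :
    letI : TopologicalSpace (G ⊕ X) := generateFrom (basisSets G X r)
    IsHomeomorph (toFiber r u) := by
  let _ : TopologicalSpace (G ⊕ X) := generateFrom (basisSets G X r)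
  have hind : IsInducing (Subtype.val ∘ toFiber r u) := by
    refine (isInducing_iff _).2 (le_antisymm
      (le_induced_generateFrom fun b hb => isOpen_preimage_val_toFiber r u hu hb) ?_)
    intro s hs
    obtain ⟨b, hb, rfl⟩ := exists_mem_basisSets_preimage_val_toFiber_eq r u hs
    exact isOpen_induced (isOpen_generateFrom_of_mem hb)
  exact isHomeomorph_iff_isEmbedding_surjective.2
    ⟨⟨IsInducing.subtypeVal.of_comp_iff.1 hind, (toFiber_bijective r u).1⟩,
      (toFiber_bijective r u).2⟩

end FiberCompactification

open FiberCompactification in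
theorem stmt8_general {G X : Type*} [TopologicalSpace G] [TopologicalSpace X]
    [T2Space G] [T2Space X]
    (r : G → X) (hc : Continuous r) (u : X) :
    letI : TopologicalSpace (G ⊕ X) := TopologicalSpace.generateFrom (basisSets G X r)
    IsHomeomorph (fun z : OnePoint (r ⁻¹' {u} : Set G) =>
      (Option.elim z ⟨Sum.inr u, rfl⟩ (fun x => ⟨Sum.inl x.1, x.2⟩) :
        {h : G ⊕ X // Sum.elim r id h = u})) :=
  isHomeomorph_toFiber r u (isClosed_singleton.preimage hc)

/-- for each `u ∈ X`, the fiber `H^u = r̃⁻¹({u})` with the subspace topology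
from `H` is the one-point compactification of the fiber `G^u = r⁻¹({u})`: the natural
bijection `OnePoint (G^u) → H^u` (sending `∞` to `∞^u` and each point of `G^u` to itself)
is a homeomorphism. -/
theorem stmt8 {G X : Type*} [TopologicalSpace G] [TopologicalSpace X]
    [LocallyCompactSpace G] [SecondCountableTopology G] [T2Space G]
    [LocallyCompactSpace X] [SecondCountableTopology X] [T2Space X]
    (r : G → X) (hc : Continuous r) (ho : IsOpenMap r) (hs : Function.Surjective r) (u : X) :
    letI : TopologicalSpace (G ⊕ X) := TopologicalSpace.generateFrom (basisSets G X r)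
    IsHomeomorph (fun z : OnePoint (r ⁻¹' {u} : Set G) =>
      (Option.elim z ⟨Sum.inr u, rfl⟩ (fun x => ⟨Sum.inl x.1, x.2⟩) :
        {h : G ⊕ X // Sum.elim r id h = u})) :=
  stmt8_general r hc u
end
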